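/- arXiv:1904.00556 — 2 statements merged into one kernel-verified Lean document; each statement's English description precedes it below -/
import Mathlib

section
/- For each i = 1, 2, 3, the element x_i·f lies in 𝔭². -/
open MvPolynomial

noncomputable def curveMap (k : Type*) [Field k] (q m : ℕ) :
    MvPolynomial (Fin 4) k →ₐ[k] MvPolynomial (Fin 2) k :=
  aeval ![X 0 ^ (2*q+1+2*m), X 0 ^ (2*q+1+m) * X 1 ^ m, X 0 ^ (2*q+1) * X 1 ^ (2*m),
    X 1 ^ (2*q+1+2*m)]

noncomputable def curveIdeal (k : Type*) [Field k] (q m : ℕ) : Ideal (MvPolynomial (Fin 4) k) :=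
  RingHom.ker (curveMap k q m)

instance (k : Type*) [Field k] (q m : ℕ) : (curveIdeal k q m).IsPrime :=
  RingHom.ker_isPrime _

noncomputable def symbPow (k : Type*) [Field k] (q m n : ℕ) :
    Ideal (MvPolynomial (Fin 4) k) :=
  (Ideal.map (algebraMap _ (Localization.AtPrime (curveIdeal k q m)))
      ((curveIdeal k q m) ^ n)).comap
    (algebraMap _ (Localization.AtPrime (curveIdeal k q m)))

noncomputable def fPoly (k : Type*) [Field k] (q m : ℕ) : MvPolynomial (Fin 4) k :=
  - X 2 ^ (2*(q+m)+1) - X 0 ^ (q-1) * X 1 ^ 3 * X 2 ^ (q+m-1) * X 3 ^ m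
    + 3 * X 0 ^ q * X 1 * X 2 ^ (q+m) * X 3 ^ m - X 0 ^ (2*q+1) * X 3 ^ (2*m)

noncomputable def moduleLength (R M : Type*) [Ring R] [AddCommGroup M] [Module R M] :
    WithBot ℕ∞ :=
  Order.krullDim (Submodule R M)

/-!
`𝔭` contains the `2 × 2` minors `a, b, c` of `[[x₁, x₂, x₃^(q+m)], [x₂, x₃, x₁^q x₄^m]]`,
and each `xᵢ f` is an explicit quadratic form in them:
`x₁ f = x₃^(q+m-1) a b - c²`, `x₂ f = -b c - x₁^(q-1) x₃^(q+m-1) x₄^m a²`,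
`x₃ f = -x₁^(q-1) x₄^m a c - b²`.
-/

section CurveMinors

variable (k : Type*) [Field k] (q m : ℕ)

noncomputable def curveMinorA : MvPolynomial (Fin 4) k := X 0 * X 2 - X 1 ^ 2

noncomputable def curveMinorB : MvPolynomial (Fin 4) k :=
  X 0 ^ q * X 1 * X 3 ^ m - X 2 ^ (q + m + 1)

noncomputable def curveMinorC : MvPolynomial (Fin 4) k :=
  X 0 ^ (q + 1) * X 3 ^ m - X 1 * X 2 ^ (q + m)

variable {k q m} in
lemma mem_curveIdeal_iff {p : MvPolynomial (Fin 4) k} :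
    p ∈ curveIdeal k q m ↔
      aeval ![(X 0 : MvPolynomial (Fin 2) k) ^ (2*q+1+2*m), X 0 ^ (2*q+1+m) * X 1 ^ m,
        X 0 ^ (2*q+1) * X 1 ^ (2*m), X 1 ^ (2*q+1+2*m)] p = 0 :=
  Iff.rfl

lemma curveMinorA_mem : curveMinorA k ∈ curveIdeal k q m := by
  rw [mem_curveIdeal_iff]
  simp only [curveMinorA, map_sub, map_mul, map_pow, aeval_X, Matrix.cons_val_zero,
    Matrix.cons_val_one, Matrix.cons_val]
  ring

lemma curveMinorB_mem : curveMinorB k q m ∈ curveIdeal k q m := by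
  rw [mem_curveIdeal_iff]
  simp only [curveMinorB, map_sub, map_mul, map_pow, aeval_X, Matrix.cons_val_zero,
    Matrix.cons_val_one, Matrix.cons_val]
  ring

lemma curveMinorC_mem : curveMinorC k q m ∈ curveIdeal k q m := by
  rw [mem_curveIdeal_iff]
  simp only [curveMinorC, map_sub, map_mul, map_pow, aeval_X, Matrix.cons_val_zero,
    Matrix.cons_val_one, Matrix.cons_val]
  ring

lemma X_zero_mul_fPoly_succ :
    X 0 * fPoly k (q + 1) m = X 2 ^ (q + m) * (curveMinorA k * curveMinorB k (q + 1) m)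
      - curveMinorC k (q + 1) m ^ 2 := by
  simp only [fPoly, curveMinorA, curveMinorB, curveMinorC, Nat.add_sub_cancel,
    Nat.add_right_comm q 1 m]
  ring

lemma X_one_mul_fPoly_succ :
    X 1 * fPoly k (q + 1) m = -(curveMinorB k (q + 1) m * curveMinorC k (q + 1) m)
      - X 0 ^ q * X 2 ^ (q + m) * X 3 ^ m * curveMinorA k ^ 2 := by
  simp only [fPoly, curveMinorA, curveMinorB, curveMinorC, Nat.add_sub_cancel,
    Nat.add_right_comm q 1 m]
  ring

lemma X_two_mul_fPoly_succ :
    X 2 * fPoly k (q + 1) m = -(X 0 ^ q * X 3 ^ m * (curveMinorA k * curveMinorC k (q + 1) m))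
      - curveMinorB k (q + 1) m ^ 2 := by
  simp only [fPoly, curveMinorA, curveMinorB, curveMinorC, Nat.add_sub_cancel,
    Nat.add_right_comm q 1 m]
  ring

end CurveMinors

theorem statement2_general (k : Type*) [Field k] (q m : ℕ) (hq : 1 ≤ q) :
    (X 0 : MvPolynomial (Fin 4) k) * fPoly k q m ∈ (curveIdeal k q m) ^ 2 ∧
    (X 1 : MvPolynomial (Fin 4) k) * fPoly k q m ∈ (curveIdeal k q m) ^ 2 ∧
    (X 2 : MvPolynomial (Fin 4) k) * fPoly k q m ∈ (curveIdeal k q m) ^ 2 := by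
  obtain ⟨q, rfl⟩ := Nat.exists_eq_add_of_le' hq
  have ha := curveMinorA_mem k (q + 1) m
  have hb := curveMinorB_mem k (q + 1) m
  have hc := curveMinorC_mem k (q + 1) m
  have mul_mem {x y} (hx : x ∈ curveIdeal k (q + 1) m) (hy : y ∈ curveIdeal k (q + 1) m) :
      x * y ∈ curveIdeal k (q + 1) m ^ 2 :=
    sq (curveIdeal k (q + 1) m) ▸ Ideal.mul_mem_mul hx hy
  refine ⟨?_, ?_, ?_⟩
  · rw [X_zero_mul_fPoly_succ]
    exact sub_mem (Ideal.mul_mem_left _ _ (mul_mem ha hb)) (Ideal.pow_mem_pow hc 2)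
  · rw [X_one_mul_fPoly_succ]
    exact sub_mem (neg_mem (mul_mem hb hc)) (Ideal.mul_mem_left _ _ (Ideal.pow_mem_pow ha 2))
  · rw [X_two_mul_fPoly_succ]
    exact sub_mem (neg_mem (Ideal.mul_mem_left _ _ (mul_mem ha hc))) (Ideal.pow_mem_pow hb 2)

/-- For each `i = 1, 2, 3`, the element `xᵢ·f` lies in `𝔭²`. -/
theorem statement2 (k : Type*) [Field k] (q m : ℕ) (hq : 1 ≤ q) (hm : 1 ≤ m)
    (hco : Nat.Coprime (2*q+1) m) :
    (X 0 : MvPolynomial (Fin 4) k) * fPoly k q m ∈ (curveIdeal k q m) ^ 2 ∧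
    (X 1 : MvPolynomial (Fin 4) k) * fPoly k q m ∈ (curveIdeal k q m) ^ 2 ∧
    (X 2 : MvPolynomial (Fin 4) k) * fPoly k q m ∈ (curveIdeal k q m) ^ 2 :=
  statement2_general k q m hq
end

section
/- The element f lies in the second symbolic power 𝔭^{(2)}. -/
open MvPolynomial

/-! The binomials `g₁ = x₁x₃ - x₂²`, `g₂ = x₂x₃^{q+m} - x₁^{q+1}x₄^m` and
`g₃ = x₃^{q+m+1} - x₁^q x₂ x₄^m` lie in `𝔭`, and `x₁ f = -g₂² - x₃^{q+m-1} g₃ g₁ ∈ 𝔭²`.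
Since `x₁ ∉ 𝔭` is a unit in `R_𝔭`, this gives `f ∈ 𝔭²R_𝔭 ∩ R = 𝔭⁽²⁾`. -/

@[simp]
lemma curveMap_X (k : Type*) [Field k] (q m : ℕ) (i : Fin 4) :
    curveMap k q m (X i) = ![X 0 ^ (2*q+1+2*m), X 0 ^ (2*q+1+m) * X 1 ^ m,
      X 0 ^ (2*q+1) * X 1 ^ (2*m), X 1 ^ (2*q+1+2*m)] i :=
  aeval_X _ i

namespace curveIdeal

variable (k : Type*) [Field k] (q m : ℕ)

lemma mem_iff (g : MvPolynomial (Fin 4) k) : g ∈ curveIdeal k q m ↔ curveMap k q m g = 0 :=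
  RingHom.mem_ker

lemma X_zero_mul_X_two_sub_X_one_sq_mem :
    (X 0 * X 2 - X 1 ^ 2 : MvPolynomial (Fin 4) k) ∈ curveIdeal k q m := by
  simp [mem_iff, sub_eq_zero, mul_pow, ← pow_mul]
  ring

lemma X_one_mul_X_two_pow_sub_mem :
    (X 1 * X 2 ^ (q+m) - X 0 ^ (q+1) * X 3 ^ m : MvPolynomial (Fin 4) k) ∈ curveIdeal k q m := by
  simp [mem_iff, sub_eq_zero, mul_pow, ← pow_mul]
  ring

lemma X_two_pow_sub_mem :
    (X 2 ^ (q+m+1) - X 0 ^ q * X 1 * X 3 ^ m : MvPolynomial (Fin 4) k) ∈ curveIdeal k q m := by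
  simp [mem_iff, sub_eq_zero, mul_pow, ← pow_mul]
  ring

lemma X_zero_not_mem : (X 0 : MvPolynomial (Fin 4) k) ∉ curveIdeal k q m := by
  rw [mem_iff, curveMap_X]
  exact pow_ne_zero _ (X_ne_zero 0)

end curveIdeal

open curveIdeal in
lemma X_zero_mul_fPoly_mem_curveIdeal_sq (k : Type*) [Field k] (q m : ℕ) :
    X 0 * fPoly k (q + 1) m ∈ curveIdeal k (q + 1) m ^ 2 := by
  have identity : X 0 * fPoly k (q + 1) m =
      -(X 1 * X 2 ^ (q+1+m) - X 0 ^ (q+1+1) * X 3 ^ m) ^ 2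
        - (X 2 ^ (q+m) * (X 2 ^ (q+1+m+1) - X 0 ^ (q+1) * X 1 * X 3 ^ m))
          * (X 0 * X 2 - X 1 ^ 2) := by
    rw [fPoly, Nat.add_sub_cancel, show q + 1 + m - 1 = q + m by omega]
    ring
  rw [identity, pow_two, pow_two]
  exact sub_mem
    (neg_mem (Ideal.mul_mem_mul (X_one_mul_X_two_pow_sub_mem k _ m)
      (X_one_mul_X_two_pow_sub_mem k _ m)))
    (Ideal.mul_mem_mul (Ideal.mul_mem_left _ _ (X_two_pow_sub_mem k _ m))
      (X_zero_mul_X_two_sub_X_one_sq_mem k _ m))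

theorem statement3_general (k : Type*) [Field k] (q m : ℕ) (hq : 1 ≤ q) :
    fPoly k q m ∈ symbPow k q m 2 := by
  obtain ⟨q, rfl⟩ := Nat.exists_eq_add_of_le' hq
  exact (IsLocalization.algebraMap_mem_map_algebraMap_iff (curveIdeal k (q + 1) m).primeCompl
    _ _ _).2 ⟨X 0, curveIdeal.X_zero_not_mem k _ m, X_zero_mul_fPoly_mem_curveIdeal_sq k q m⟩

/-- The element `f` lies in the second symbolic power `𝔭⁽²⁾`. -/
theorem statement3 (k : Type*) [Field k] (q m : ℕ) (hq : 1 ≤ q) (hm : 1 ≤ m)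
    (hco : Nat.Coprime (2*q+1) m) :
    fPoly k q m ∈ symbPow k q m 2 :=
  statement3_general k q m hq
end
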